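/- arXiv:2403.18641 — 3 statements merged into one kernel-verified Lean document; each statement's English description precedes it below -/
import Mathlib

section
/- Let 0 < τ₁ < ⋯ < τ_M ≤ 1 be distinct positive nodes, Q the M×M collocation matrix with entries ∫₀^{τᵢ} ℓⱼ(s) ds, and Q_{Δ,M} = diag(τ₁/M, …, τ_M/M). Then the vector τ^{M−1} = (τ₁^{M−1}, …, τ_M^{M−1}) lies in the kernel of Q − Q_{Δ,M}. -/
open Polynomial Matrix Finset

noncomputable def collMat {M : ℕ} (τ : Fin M → ℝ) : Matrix (Fin M) (Fin M) ℝ :=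
  Matrix.of fun i j => ∫ s in (0:ℝ)..(τ i), (Lagrange.basis Finset.univ τ j).eval s

/-- `τ^{M-1}` lies in the kernel of `Q - Q_{Δ,M}`. -/
theorem monomial_in_kernel (M : ℕ) (hM : 1 ≤ M) (τ : Fin M → ℝ) (hmono : StrictMono τ)
    (hpos : ∀ i, 0 < τ i) (h1 : ∀ i, τ i ≤ 1) :
    (collMat τ - Matrix.diagonal fun i => τ i / M).mulVec (fun i => τ i ^ (M - 1)) = 0 := by
  have hinj : Set.InjOn τ (Finset.univ : Finset (Fin M)) := fun a _ b _ h => hmono.injective h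
  have hkey : (X : ℝ[X]) ^ (M - 1) =
      Lagrange.interpolate Finset.univ τ (fun j => τ j ^ (M - 1)) := by
    have := Lagrange.eq_interpolate (f := (X : ℝ[X]) ^ (M - 1)) hinj (by
      rw [Finset.card_univ, Fintype.card_fin]
      calc ((X : ℝ[X]) ^ (M - 1)).degree ≤ (M - 1 : ℕ) := by
            simpa using Polynomial.degree_X_pow_le (R := ℝ) (M - 1)
        _ < (M : ℕ) := by exact_mod_cast Nat.sub_lt hM one_pos)
    simpa using this
  funext i
  simp only [Matrix.mulVec, Matrix.sub_apply, Pi.zero_apply, dotProduct,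
    sub_mul, Finset.sum_sub_distrib, Matrix.diagonal_apply, collMat, Matrix.of_apply]
  have hD : ∑ j, (if i = j then τ i / M else 0) * τ j ^ (M - 1) = τ i ^ M / M := by
    rw [Finset.sum_eq_single i]
    · rw [if_pos rfl]
      rw [div_mul_eq_mul_div, ← pow_succ' (τ i) (M - 1), Nat.sub_add_cancel hM]
    · intro b _ hb; rw [if_neg (Ne.symm hb), zero_mul]
    · simp
  have hQ : ∑ j, (∫ s in (0:ℝ)..(τ i), (Lagrange.basis Finset.univ τ j).eval s)
      * τ j ^ (M - 1) = τ i ^ M / M := by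
    have : ∑ j, (∫ s in (0:ℝ)..(τ i), (Lagrange.basis Finset.univ τ j).eval s) * τ j ^ (M - 1)
        = ∫ s in (0:ℝ)..(τ i),
          ∑ j, (Lagrange.basis Finset.univ τ j).eval s * τ j ^ (M - 1) := by
      rw [intervalIntegral.integral_finset_sum]
      · exact Finset.sum_congr rfl fun j _ => by
          rw [← intervalIntegral.integral_mul_const]
      · intro j _
        exact ((Lagrange.basis Finset.univ τ j).continuous_aeval.mul
          continuous_const).intervalIntegrable _ _
    rw [this]
    have heq : ∀ s : ℝ, ∑ j, (Lagrange.basis Finset.univ τ j).eval s * τ j ^ (M - 1)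
        = s ^ (M - 1) := by
      intro s
      have := congrArg (Polynomial.eval s) hkey
      rw [Lagrange.interpolate_apply, Polynomial.eval_pow, Polynomial.eval_X,
        Polynomial.eval_finset_sum] at this
      simp only [Polynomial.eval_mul, Polynomial.eval_C] at this
      rw [this]
      exact Finset.sum_congr rfl fun j _ => mul_comm _ _
    rw [intervalIntegral.integral_congr (fun s _ => heq s), integral_pow,
      Nat.sub_add_cancel hM]
    have h : ((M - 1 : ℕ) : ℝ) + 1 = M := by exact_mod_cast Nat.sub_add_cancel hM
    rw [zero_pow (by omega), sub_zero, h]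
  rw [hD, hQ, sub_self]
end

section
/- Let 0 < τ₁ < ⋯ < τ_M ≤ 1 be distinct positive nodes, Q the M×M collocation matrix, and Q_{Δ,M} = diag(τ₁/M, …, τ_M/M). Then the matrix Q − Q_{Δ,M} is nilpotent with (Q − Q_{Δ,M})^M = 0. -/
open Polynomial Matrix Finset

/-!
In the basis of monomials `tⁿ`, `n < M`, sampled at the nodes, `Q` integrates and
`Q_{Δ,M}` multiplies by `t / M`, so `Q - Q_{Δ,M}` sends `tⁿ` to `(1/(n+1) - 1/M) tⁿ⁺¹`.
The coefficient vanishes for `n = M - 1`, hence `M` applications kill every monomial; the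
monomials span `ℝ^M` because the Vandermonde matrix of distinct nodes is invertible.
-/

theorem pow_mulVec_eq_zero_of_shift {R : Type*} [CommSemiring R] {M : ℕ}
    {A : Matrix (Fin M) (Fin M) R} {v : ℕ → Fin M → R} {c : ℕ → R} (hA : ∀ n < M, A *ᵥ v n = c n • v (n + 1)) (hc : ∀ n, n + 1 = M → c n = 0)
    {n : ℕ} (hn : n < M) : A ^ M *ᵥ v n = 0 := by
  have hkill : ∀ k n, n + k + 1 = M → A ^ (k + 1) *ᵥ v n = 0 := by
    intro k
    induction k with
    | zero =>
      intro n hn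
      rw [zero_add, pow_one, hA n (by omega), hc n (by omega), zero_smul]
    | succ k ih =>
      intro n hn
      rw [pow_succ, ← mulVec_mulVec, hA n (by omega), mulVec_smul, ih (n + 1) (by omega),
        smul_zero]
  obtain ⟨k, hk⟩ : ∃ k, n + k + 1 = M := ⟨M - n - 1, by omega⟩
  have hsplit : A ^ M = A ^ n * A ^ (k + 1) := by
    rw [← pow_add]
    congr 1
    omega
  rw [hsplit, ← mulVec_mulVec, hkill k n hk, mulVec_zero]

theorem Matrix.eq_zero_of_forall_mulVec_pow_eq_zero {R : Type*} [CommRing R] [IsDomain R]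
    {M : ℕ} {B : Matrix (Fin M) (Fin M) R} {τ : Fin M → R} (hτ : Function.Injective τ)
    (hB : ∀ n < M, B *ᵥ (fun i => τ i ^ n) = 0) : B = 0 := by
  ext r
  have hrow : B r = 0 := eq_zero_of_forall_pow_sum_mul_pow_eq_zero hτ fun n =>
    congrFun (hB n n.isLt) r
  exact congrFun hrow _

section Collocation

variable {M : ℕ} {τ : Fin M → ℝ}

theorem collMat_mulVec_eval (hτ : Function.Injective τ) {p : ℝ[X]} (hp : p.degree < M) :
    collMat τ *ᵥ (fun j => p.eval (τ j)) = fun i => ∫ s in (0:ℝ)..(τ i), p.eval s := by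
  have hinterp : p = Lagrange.interpolate univ τ fun j => p.eval (τ j) :=
    Lagrange.eq_interpolate hτ.injOn (by simpa using hp)
  funext i
  conv_rhs => rw [hinterp, Lagrange.interpolate_apply]
  simp only [eval_finsetSum, eval_mul, eval_C]
  rw [intervalIntegral.integral_finsetSum
    (f := fun j s => eval (τ j) p * eval s (Lagrange.basis univ τ j)) fun j _ =>
      (continuous_const.mul (Polynomial.continuous _)).intervalIntegrable _ _]
  simp only [mulVec, dotProduct, collMat, of_apply, intervalIntegral.integral_const_mul]
  exact sum_congr rfl fun j _ => mul_comm _ _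

theorem collMat_mulVec_pow (hτ : Function.Injective τ) {n : ℕ} (hn : n < M) :
    collMat τ *ᵥ (fun j => τ j ^ n) = fun i => τ i ^ (n + 1) / (n + 1) := by
  have hdeg : (X ^ n : ℝ[X]).degree < M := by
    rw [degree_X_pow]
    exact_mod_cast hn
  simpa [integral_pow] using collMat_mulVec_eval hτ hdeg

theorem collMat_sub_diagonal_mulVec_pow (hτ : Function.Injective τ) {n : ℕ} (hn : n < M) :
    (collMat τ - diagonal fun i => τ i / M) *ᵥ (fun j => τ j ^ n)
      = ((n + 1 : ℝ)⁻¹ - (M : ℝ)⁻¹) • fun j => τ j ^ (n + 1) := by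
  funext i
  simp only [sub_mulVec, Pi.sub_apply, collMat_mulVec_pow hτ hn, mulVec_diagonal,
    Pi.smul_apply, smul_eq_mul]
  ring

end Collocation

theorem minSRNS_nilpotent_general (M : ℕ) (τ : Fin M → ℝ) (hmono : StrictMono τ) :
    (collMat τ - Matrix.diagonal fun i => τ i / M) ^ M = 0 := by
  refine eq_zero_of_forall_mulVec_pow_eq_zero hmono.injective fun n hn => ?_
  refine pow_mulVec_eq_zero_of_shift (v := fun n j => τ j ^ n)
    (fun n hn => collMat_sub_diagonal_mulVec_pow hmono.injective hn) (fun n hn => ?_) hn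
  rw [← hn, Nat.cast_add_one, sub_self]

/-- Theorem 2.6, MIN-SR-NS: `(Q - Q_{Δ,M})^M = 0`. -/
theorem minSRNS_nilpotent (M : ℕ) (hM : 1 ≤ M) (τ : Fin M → ℝ) (hmono : StrictMono τ)
    (hpos : ∀ i, 0 < τ i) (h1 : ∀ i, τ i ≤ 1) :
    (collMat τ - Matrix.diagonal fun i => τ i / M) ^ M = 0 :=
  minSRNS_nilpotent_general M τ hmono
end

section
/- Let 0 < τ₁ < ⋯ < τ_M ≤ 1 be distinct positive nodes, Q the M×M collocation matrix, and Q_{Δ,M} = diag(τ₁/M, …, τ_M/M). Then the spectral radius of Q − Q_{Δ,M} is zero, i.e., all eigenvalues of Q − Q_{Δ,M} are zero. -/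
/-!
Identify `v` with its interpolating polynomial `p`, of degree `< M`. Then `(Q v)ᵢ = P(τᵢ)` with
`P` the antiderivative of `p` vanishing at `0`, so `(Q - Q_{Δ,M}) v = μ v` says that
`P - X p / M - μ p` vanishes at the `M` nodes. The weight `1/M` makes the leading terms of `P` and
`X p / M` cancel, so this polynomial has degree `< M` and is zero. Comparing coefficients from the
constant term upward, `μ pₖ = pₖ₋₁ / k - pₖ₋₁ / M`, hence `μ ≠ 0` forces `p = 0`, i.e. `v = 0`.
-/

open Polynomial Matrix Finset

namespace Polynomial

variable {K : Type*} [Field K]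

noncomputable def antideriv : K[X] →ₗ[K] K[X] :=
  lsum fun n => ((n + 1 : K)⁻¹) • monomial (n + 1)

@[simp]
theorem coeff_antideriv_zero (p : K[X]) : (antideriv p).coeff 0 = 0 := by
  simp [antideriv, lsum_apply, Polynomial.sum, coeff_monomial]

@[simp]
theorem coeff_antideriv_succ (p : K[X]) (k : ℕ) :
    (antideriv p).coeff (k + 1) = p.coeff k / (k + 1) := by
  rw [antideriv, lsum_apply, Polynomial.sum_def, finsetSum_coeff, Finset.sum_eq_single k]
  · simp [div_eq_inv_mul]
  · intro n _ hn
    simp [coeff_monomial, hn]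
  · intro hk
    simp [notMem_support_iff.mp hk]

theorem derivative_antideriv [CharZero K] (p : K[X]) : derivative (antideriv p) = p := by
  ext n
  rw [coeff_derivative, coeff_antideriv_succ]
  have : (n + 1 : K) ≠ 0 := Nat.cast_add_one_ne_zero n
  field_simp

theorem map_antideriv {L : Type*} [Field L] (f : K →+* L) (p : K[X]) :
    (antideriv p).map f = antideriv (p.map f) := by
  ext (_ | k)
  · simp
  · simp [map_div₀]

theorem integral_eval_eq_sub_eval_antideriv (p : ℝ[X]) (a b : ℝ) :
    ∫ x in a..b, p.eval x = (antideriv p).eval b - (antideriv p).eval a := by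
  refine intervalIntegral.integral_eq_sub_of_hasDerivAt (f := (antideriv p).eval) (fun x _ => ?_)
    (p.continuous.intervalIntegrable a b)
  simpa only [derivative_antideriv] using (antideriv p).hasDerivAt x

theorem degree_antideriv_sub_inv_smul_X_mul_lt {p : K[X]} {n : ℕ} (hp : p.degree < n) :
    (antideriv p - (n : K)⁻¹ • (X * p) : K[X]).degree < n := by
  rw [degree_lt_iff_coeff_zero] at hp ⊢
  rintro (_ | m) hm
  · simp
  rw [coeff_sub, coeff_antideriv_succ, coeff_smul, coeff_X_mul, smul_eq_mul]
  rcases Nat.le_succ_iff.mp hm with hm | rfl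
  · simp [hp m hm]
  · push_cast
    ring

theorem eq_zero_of_antideriv_sub_smul_X_mul_eq_smul {p : K[X]} {c μ : K} (hμ : μ ≠ 0)
    (h : antideriv p - c • (X * p) = μ • p) : p = 0 := by
  have hcoeff (k : ℕ) := congrArg (coeff · k) h
  simp only [coeff_sub, coeff_smul, smul_eq_mul] at hcoeff
  ext k
  induction k with
  | zero => simpa [hμ] using (hcoeff 0).symm
  | succ k ih => simpa [ih, hμ] using (hcoeff (k + 1)).symm

end Polynomial

theorem Matrix.exists_mulVec_eq_smul_of_mem_spectrum {K n : Type*} [Field K] [Fintype n]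
    [DecidableEq n] {A : Matrix n n K} {μ : K} (hμ : μ ∈ spectrum K A) :
    ∃ v ≠ 0, A *ᵥ v = μ • v := by
  rw [← spectrum_toLin', ← Module.End.hasEigenvalue_iff_mem_spectrum] at hμ
  obtain ⟨v, hv⟩ := hμ.exists_hasEigenvector
  exact ⟨v, hv.2, by simpa using hv.apply_eq_smul⟩

namespace Lagrange

variable {K L ι : Type*} [Field K] [Field L] [DecidableEq ι]

theorem map_basis (f : K →+* L) (s : Finset ι) (x : ι → K) (j : ι) :
    (Lagrange.basis s x j).map f = Lagrange.basis s (f ∘ x) j := by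
  simp [Lagrange.basis, basisDivisor, Polynomial.map_prod]

variable [Fintype ι]

noncomputable def collocationMatrix (x : ι → K) : Matrix ι ι K :=
  Matrix.of fun i j => (antideriv (Lagrange.basis univ x j)).eval (x i)

theorem map_collocationMatrix (f : K →+* L) (x : ι → K) :
    (collocationMatrix x).map f = collocationMatrix (f ∘ x) := by
  ext i j
  simp [collocationMatrix, ← map_basis, ← map_antideriv, eval_map, eval₂_at_apply]

theorem collocationMatrix_mulVec (x v : ι → K) (i : ι) :
    (collocationMatrix x *ᵥ v) i = (antideriv (interpolate univ x v)).eval (x i) := by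
  simp only [interpolate_apply, C_mul', map_sum, map_smul, eval_finsetSum, eval_smul, smul_eq_mul]
  simp only [collocationMatrix, mulVec, dotProduct, of_apply, mul_comm]

theorem eq_zero_of_collocationMatrix_sub_diagonal_mulVec_eq_smul {x : ι → K}
    (hx : Function.Injective x) {μ : K} (hμ : μ ≠ 0) {v : ι → K}
    (hv : (collocationMatrix x - diagonal fun i => x i / Fintype.card ι) *ᵥ v = μ • v) :
    v = 0 := by
  set n := Fintype.card ι
  set p := interpolate univ x v
  have hinj : Set.InjOn x (univ : Finset ι) := hx.injOn
  have hp_node (i : ι) : p.eval (x i) = v i := eval_interpolate_at_node v hinj (mem_univ i)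
  have hp_deg : p.degree < n := degree_interpolate_lt v hinj
  set q := antideriv p - (n : K)⁻¹ • (X * p) - μ • p
  have hq_node (i : ι) : q.eval (x i) = 0 := by
    have hvi := congrFun hv i
    simp only [sub_mulVec, Pi.sub_apply, collocationMatrix_mulVec, mulVec_diagonal,
      Pi.smul_apply, smul_eq_mul] at hvi
    simp only [q, eval_sub, eval_smul, eval_mul, eval_X, hp_node, smul_eq_mul]
    linear_combination hvi
  have hq_deg : q.degree < n :=
    (degree_sub_le _ _).trans_lt <| max_lt (degree_antideriv_sub_inv_smul_X_mul_lt hp_deg)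
      ((degree_smul_le μ p).trans_lt hp_deg)
  have hq : q = 0 := eq_zero_of_degree_lt_of_eval_index_eq_zero univ hinj hq_deg
    fun i _ => hq_node i
  have hp : p = 0 := eq_zero_of_antideriv_sub_smul_X_mul_eq_smul hμ (sub_eq_zero.mp hq)
  ext i
  rw [← hp_node, hp, eval_zero, Pi.zero_apply]

theorem spectrum_collocationMatrix_sub_diagonal_subset {x : ι → K} (hx : Function.Injective x) :
    spectrum K (collocationMatrix x - diagonal fun i => x i / Fintype.card ι) ⊆ {0} := by
  intro μ hμ
  by_contra hμ0
  obtain ⟨v, hv0, hv⟩ := exists_mulVec_eq_smul_of_mem_spectrum hμ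
  exact hv0 (eq_zero_of_collocationMatrix_sub_diagonal_mulVec_eq_smul hx hμ0 hv)

end Lagrange

theorem collMat_eq_collocationMatrix {M : ℕ} (τ : Fin M → ℝ) :
    collMat τ = Lagrange.collocationMatrix τ := by
  ext i j
  simp [collMat, Lagrange.collocationMatrix, integral_eval_eq_sub_eval_antideriv,
    ← coeff_zero_eq_eval_zero]

theorem minSRNS_spectral_radius_zero_general (M : ℕ) (τ : Fin M → ℝ)
    (hmono : StrictMono τ) :
    spectrum ℂ ((collMat τ - Matrix.diagonal fun i => τ i / M).map (algebraMap ℝ ℂ)) ⊆ {0} := by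
  have hcomplex : (collMat τ - Matrix.diagonal fun i => τ i / M).map (algebraMap ℝ ℂ) =
      Lagrange.collocationMatrix (algebraMap ℝ ℂ ∘ τ) -
        diagonal fun i => (algebraMap ℝ ℂ ∘ τ) i / Fintype.card (Fin M) := by
    rw [Matrix.map_sub _ (map_sub _), diagonal_map (map_zero _), collMat_eq_collocationMatrix,
      Lagrange.map_collocationMatrix]
    simp
  rw [hcomplex]
  exact Lagrange.spectrum_collocationMatrix_sub_diagonal_subset
    ((algebraMap ℝ ℂ).injective.comp hmono.injective)

/-- the spectral radius of `Q - Q_{Δ,M}` is zero: every (complex) eigenvalue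
of `Q - Q_{Δ,M}` is zero. -/
theorem minSRNS_spectral_radius_zero (M : ℕ) (hM : 1 ≤ M) (τ : Fin M → ℝ)
    (hmono : StrictMono τ) (hpos : ∀ i, 0 < τ i) (h1 : ∀ i, τ i ≤ 1) :
    spectrum ℂ ((collMat τ - Matrix.diagonal fun i => τ i / M).map (algebraMap ℝ ℂ)) ⊆ {0} :=
  minSRNS_spectral_radius_zero_general M τ hmono
end
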